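/- The discretized Bellman operator T is a contraction in the sup-norm with contraction factor λ/(λ+δ) < 1 on the component coming from the no-intervention branch combined with the nonexpansive intervention branch; precisely, for vectors v, w ∈ ℝ^{N+1} with v[0] = w[0] = 0, defining (Tv)[j] = max{ (1/(λ+δ)) (G(jh) + λ Σ_{i=0}^{j} v[j−i] p_i), max_{0 ≤ i ≤ N−j} (v[j+i] − C(jh, ih)) }, if C(r,ζ) ≥ c₀ > 0 for all arguments, then repeated application of T starting from the zero vector converges to the unique fixed point of T. -/

import Mathlib

open Filter

/-- The discretized Bellman operator on ℝ^{N+1}, with step h = 1/N and convention (Tv)[0] = 0. -/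
noncomputable def bellmanOp (N : ℕ) (lam delta : ℝ) (G : ℝ → ℝ) (p : ℕ → ℝ)
    (C : ℝ → ℝ → ℝ) (v : Fin (N + 1) → ℝ) : Fin (N + 1) → ℝ :=
  fun j =>
    if j.val = 0 then 0
    else
      max
        ((1 / (lam + delta)) *
          (G (j.val * (1 / N)) +
            lam * ∑ i ∈ Finset.range (j.val + 1),
              v ⟨j.val - i, lt_of_le_of_lt (Nat.sub_le _ _) j.isLt⟩ * p i))
        ((Finset.range (N - j.val + 1)).attach.sup'
          (Finset.attach_nonempty_iff.mpr ⟨0, Finset.mem_range.mpr (Nat.succ_pos _)⟩)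
          (fun i =>
            v ⟨j.val + i.val, by
                have hi := Finset.mem_range.mp i.prop
                have hj := j.isLt
                omega⟩ -
              C (j.val * (1 / N)) (i.val * (1 / N))))

/-!
The operator is monotone and commutes with adding a constant `D` up to an error: the
no-intervention branch shifts by at most `λ/(λ+δ) D`, the intervention branch by exactly `D`.
So `T` is 1-Lipschitz in the sup norm but not a contraction, and convergence comes from order
instead: `0 ≤ T 0` and `T` maps the constant `KG/δ` below itself, so the iterates from `0`
increase, stay below `KG/δ`, and converge to a fixed point.

For uniqueness, let `v, w` be fixed points and `j` the largest index at which `v - w` attains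
its maximum `d > 0` (note `j ≠ 0`, as both vanish there). If `v j` is realised by the
no-intervention branch then `d ≤ λ/(λ+δ) d`. If it is realised by an intervention of size `i`,
the gap at `j + i` is at least `d`, so `i = 0` by the choice of `j`, and then
`v j = v j - C(jh, 0) < v j`.
-/

open Topology Function

theorem exists_isFixedPt_tendsto_iterate_of_monotone {α : Type*}
    [ConditionallyCompleteLattice α] [TopologicalSpace α] [SupConvergenceClass α] [T2Space α]
    {f : α → α} (hf : Monotone f) (hc : Continuous f) {x u : α}
    (hx : x ≤ f x) (hu : f u ≤ u) (hxu : x ≤ u) :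
    ∃ y, IsFixedPt f y ∧ Tendsto (fun n => f^[n] x) atTop (𝓝 y) := by
  have hbdd : ∀ n, f^[n] x ≤ u := fun n =>
    (hf.iterate n hxu).trans (hf.antitone_iterate_of_map_le hu (Nat.zero_le n))
  have hlim := tendsto_atTop_ciSup (hf.monotone_iterate_of_le_map hx)
    ⟨u, Set.forall_mem_range.2 hbdd⟩
  exact ⟨_, isFixedPt_of_tendsto_iterate hlim hc.continuousAt, hlim⟩

theorem lipschitzWith_one_of_le_add {ι : Type*} [Fintype ι] {f : (ι → ℝ) → ι → ℝ}
    (hf : ∀ v w D, 0 ≤ D → (∀ k, v k ≤ w k + D) → ∀ j, f v j ≤ f w j + D) :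
    LipschitzWith 1 f := by
  refine LipschitzWith.of_dist_le_mul fun v w => ?_
  rw [NNReal.coe_one, one_mul, dist_pi_le_iff dist_nonneg]
  intro j
  have hD : ∀ k, |v k - w k| ≤ dist v w := fun k => by
    simpa only [Real.dist_eq] using dist_le_pi_dist v w k
  rw [Real.dist_eq, abs_sub_le_iff]
  constructor
  · linarith [hf v w _ dist_nonneg (fun k => by linarith [(abs_le.1 (hD k)).2]) j]
  · linarith [hf w v _ dist_nonneg (fun k => by linarith [(abs_le.1 (hD k)).1]) j]

theorem Finite.exists_greatest_argmax {ι β : Type*} [Finite ι] [Nonempty ι] [LinearOrder ι]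
    [LinearOrder β] (f : ι → β) : ∃ j, ∀ k, f k < f j ∨ (f k = f j ∧ k ≤ j) := by
  obtain ⟨j, hj⟩ := Finite.exists_max fun k => toLex (f k, k)
  exact ⟨j, fun k => Prod.Lex.toLex_le_toLex.1 (hj k)⟩

theorem Finset.sum_mul_le_sum_mul_add {ι : Type*} {s : Finset ι} {f g p : ι → ℝ} {D : ℝ}
    (hD : 0 ≤ D) (hp : ∀ i ∈ s, 0 ≤ p i) (hps : ∑ i ∈ s, p i ≤ 1)
    (h : ∀ i ∈ s, f i ≤ g i + D) : ∑ i ∈ s, f i * p i ≤ ∑ i ∈ s, g i * p i + D :=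
  calc ∑ i ∈ s, f i * p i ≤ ∑ i ∈ s, (g i * p i + D * p i) :=
        Finset.sum_le_sum fun i hi => by nlinarith [h i hi, hp i hi]
    _ = ∑ i ∈ s, g i * p i + D * ∑ i ∈ s, p i := by rw [Finset.sum_add_distrib, Finset.mul_sum]
    _ ≤ ∑ i ∈ s, g i * p i + D := by gcongr; exact mul_le_of_le_one_right hD hps

theorem natCast_mul_one_div_mem_Icc {j N : ℕ} (h : j ≤ N) :
    (j : ℝ) * (1 / N) ∈ Set.Icc (0 : ℝ) 1 := by
  refine ⟨by positivity, ?_⟩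
  rcases N.eq_zero_or_pos with rfl | hN
  · simp
  · rw [mul_one_div, div_le_one (by exact_mod_cast hN)]
    exact_mod_cast h

namespace BellmanOp

variable (N : ℕ) (lam delta : ℝ) (G : ℝ → ℝ) (p : ℕ → ℝ) (C : ℝ → ℝ → ℝ)

noncomputable def continuationValue (v : Fin (N + 1) → ℝ) (j : Fin (N + 1)) : ℝ :=
  (1 / (lam + delta)) *
    (G (j.val * (1 / N)) +
      lam * ∑ i ∈ Finset.range (j.val + 1),
        v ⟨j.val - i, lt_of_le_of_lt (Nat.sub_le _ _) j.isLt⟩ * p i)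

noncomputable def interventionGain (v : Fin (N + 1) → ℝ) (j : Fin (N + 1))
    (i : Finset.range (N - j.val + 1)) : ℝ :=
  v ⟨j.val + i.val, by have := Finset.mem_range.mp i.prop; omega⟩ -
    C (j.val * (1 / N)) (i.val * (1 / N))

noncomputable def interventionValue (v : Fin (N + 1) → ℝ) (j : Fin (N + 1)) : ℝ :=
  (Finset.range (N - j.val + 1)).attach.sup'
    (Finset.attach_nonempty_iff.mpr ⟨0, Finset.mem_range.mpr (Nat.succ_pos _)⟩)
    (interventionGain N C v j)

variable {N}

theorem le_interventionValue (v : Fin (N + 1) → ℝ) (j : Fin (N + 1)) (i : ℕ)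
    (hi : j.val + i < N + 1) :
    v ⟨j.val + i, hi⟩ - C (j.val * (1 / N)) (i * (1 / N)) ≤ interventionValue N C v j :=
  Finset.le_sup' (interventionGain N C v j)
    (Finset.mem_attach _ ⟨i, Finset.mem_range.mpr (by omega)⟩)

theorem exists_interventionValue_eq (v : Fin (N + 1) → ℝ) (j : Fin (N + 1)) :
    ∃ i, ∃ hi : j.val + i < N + 1,
      interventionValue N C v j = v ⟨j.val + i, hi⟩ - C (j.val * (1 / N)) (i * (1 / N)) := by
  obtain ⟨i, -, hi⟩ := Finset.exists_mem_eq_sup' _ (interventionGain N C v j)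
  exact ⟨i.val, by have := Finset.mem_range.mp i.prop; omega, hi⟩

variable {lam delta G p C}

theorem bellmanOp_apply_of_eq_zero {v : Fin (N + 1) → ℝ} {j : Fin (N + 1)} (hj : j.val = 0) :
    bellmanOp N lam delta G p C v j = 0 :=
  if_pos hj

theorem bellmanOp_apply_of_ne_zero {v : Fin (N + 1) → ℝ} {j : Fin (N + 1)} (hj : j.val ≠ 0) :
    bellmanOp N lam delta G p C v j =
      max (continuationValue N lam delta G p v j) (interventionValue N C v j) :=
  if_neg hj

theorem continuationValue_le_add (hlam : 0 ≤ lam) (hdelta : 0 ≤ delta) (hp : ∀ i, 0 ≤ p i)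
    (hpsum : ∑ i ∈ Finset.range (N + 1), p i ≤ 1) {v w : Fin (N + 1) → ℝ} {D : ℝ}
    (hD : 0 ≤ D) (h : ∀ k, v k ≤ w k + D) (j : Fin (N + 1)) :
    continuationValue N lam delta G p v j ≤
      continuationValue N lam delta G p w j + lam / (lam + delta) * D := by
  have hpj : ∑ i ∈ Finset.range (j.val + 1), p i ≤ 1 :=
    (Finset.sum_le_sum_of_subset_of_nonneg (Finset.range_subset_range.2 j.isLt)
      fun i _ _ => hp i).trans hpsum
  have hS := Finset.sum_mul_le_sum_mul_add hD (fun i _ => hp i) hpj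
    fun i _ => h ⟨j.val - i, lt_of_le_of_lt (Nat.sub_le _ _) j.isLt⟩
  unfold continuationValue
  calc _ ≤ 1 / (lam + delta) * (G (j.val * (1 / N)) + lam * (∑ i ∈ Finset.range (j.val + 1),
          w ⟨j.val - i, lt_of_le_of_lt (Nat.sub_le _ _) j.isLt⟩ * p i + D)) := by gcongr
    _ = _ := by ring

theorem continuationValue_zero (j : Fin (N + 1)) :
    continuationValue N lam delta G p 0 j = 1 / (lam + delta) * G (j.val * (1 / N)) := by
  simp [continuationValue]

theorem interventionValue_le_add {v w : Fin (N + 1) → ℝ} {D : ℝ} (h : ∀ k, v k ≤ w k + D)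
    (j : Fin (N + 1)) : interventionValue N C v j ≤ interventionValue N C w j + D := by
  obtain ⟨i, hi, hv⟩ := exists_interventionValue_eq C v j
  linarith [h ⟨j.val + i, hi⟩, le_interventionValue C w j i hi]

theorem bellmanOp_le_add (hlam : 0 ≤ lam) (hdelta : 0 ≤ delta) (hp : ∀ i, 0 ≤ p i)
    (hpsum : ∑ i ∈ Finset.range (N + 1), p i ≤ 1) {v w : Fin (N + 1) → ℝ} {D : ℝ}
    (hD : 0 ≤ D) (h : ∀ k, v k ≤ w k + D) (j : Fin (N + 1)) :
    bellmanOp N lam delta G p C v j ≤ bellmanOp N lam delta G p C w j + D := by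
  rcases eq_or_ne j.val 0 with hj | hj
  · simp only [bellmanOp_apply_of_eq_zero hj, zero_add, hD]
  simp only [bellmanOp_apply_of_ne_zero hj]
  have hq : lam / (lam + delta) * D ≤ D :=
    mul_le_of_le_one_left hD (div_le_one_of_le₀ (le_add_of_nonneg_right hdelta) (by positivity))
  refine max_le ?_ ?_
  · linarith [continuationValue_le_add (G := G) hlam hdelta hp hpsum hD h j,
      le_max_left (continuationValue N lam delta G p w j) (interventionValue N C w j)]
  · linarith [interventionValue_le_add (C := C) h j,
      le_max_right (continuationValue N lam delta G p w j) (interventionValue N C w j)]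

theorem bellmanOp_monotone (hlam : 0 ≤ lam) (hdelta : 0 ≤ delta) (hp : ∀ i, 0 ≤ p i)
    (hpsum : ∑ i ∈ Finset.range (N + 1), p i ≤ 1) : Monotone (bellmanOp N lam delta G p C) :=
  fun v w h j => by
    simpa using bellmanOp_le_add hlam hdelta hp hpsum le_rfl (fun k => by simpa using h k) j

theorem bellmanOp_lipschitzWith_one (hlam : 0 ≤ lam) (hdelta : 0 ≤ delta) (hp : ∀ i, 0 ≤ p i)
    (hpsum : ∑ i ∈ Finset.range (N + 1), p i ≤ 1) :
    LipschitzWith 1 (bellmanOp N lam delta G p C) :=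
  lipschitzWith_one_of_le_add fun _ _ _ hD h => bellmanOp_le_add hlam hdelta hp hpsum hD h

theorem zero_le_bellmanOp_zero (hlam : 0 ≤ lam) (hdelta : 0 ≤ delta)
    (hG : ∀ r ∈ Set.Icc (0 : ℝ) 1, 0 ≤ G r) : 0 ≤ bellmanOp N lam delta G p C 0 := by
  intro j
  rcases eq_or_ne j.val 0 with hj | hj
  · simp [bellmanOp_apply_of_eq_zero hj]
  rw [bellmanOp_apply_of_ne_zero hj, continuationValue_zero]
  exact le_max_of_le_left <|
    mul_nonneg (by positivity) (hG _ (natCast_mul_one_div_mem_Icc (Nat.lt_succ_iff.1 j.isLt)))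

theorem bellmanOp_const_le (hlam : 0 ≤ lam) (hdelta : 0 < delta) (hp : ∀ i, 0 ≤ p i)
    (hpsum : ∑ i ∈ Finset.range (N + 1), p i ≤ 1) {K : ℝ} (hK : 0 ≤ K)
    (hG : ∀ r ∈ Set.Icc (0 : ℝ) 1, G r ≤ K) (hC : ∀ r ζ, 0 ≤ C r ζ) :
    bellmanOp N lam delta G p C (fun _ => K / delta) ≤ fun _ => K / delta := by
  intro j
  have hM : 0 ≤ K / delta := by positivity
  rcases eq_or_ne j.val 0 with hj | hj
  · simpa [bellmanOp_apply_of_eq_zero hj] using hM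
  rw [bellmanOp_apply_of_ne_zero hj]
  refine max_le ?_ ?_
  · have hA := continuationValue_le_add (G := G) hlam hdelta.le hp hpsum hM
      (v := fun _ => K / delta) (w := 0) (fun _ => by simp) j
    have hGj := hG _ (natCast_mul_one_div_mem_Icc (Nat.lt_succ_iff.1 j.isLt))
    rw [continuationValue_zero] at hA
    calc _ ≤ 1 / (lam + delta) * K + lam / (lam + delta) * (K / delta) := by
          refine hA.trans (add_le_add_left (mul_le_mul_of_nonneg_left hGj ?_) _)
          positivity
      _ = K / delta := by field_simp; ring
  · obtain ⟨i, hi, hB⟩ := exists_interventionValue_eq C (fun _ => K / delta) j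
    linarith [hC (j.val * (1 / N)) (i * (1 / N))]

theorem le_of_bellmanOp_eq (hlam : 0 ≤ lam) (hdelta : 0 < delta) (hp : ∀ i, 0 ≤ p i)
    (hpsum : ∑ i ∈ Finset.range (N + 1), p i ≤ 1) (hC : ∀ r, 0 < C r 0)
    {v w : Fin (N + 1) → ℝ} (hv : bellmanOp N lam delta G p C v = v)
    (hw : bellmanOp N lam delta G p C w = w) : v ≤ w := by
  obtain ⟨j, hj⟩ := Finite.exists_greatest_argmax fun k => v k - w k
  have hgap : ∀ k, v k ≤ w k + (v j - w j) := fun k => by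
    rcases hj k with h | ⟨h, -⟩ <;> linarith
  suffices v j - w j ≤ 0 from fun k => by linarith [hgap k]
  by_contra! hd
  have hvj := congrFun hv j
  have hwj := congrFun hw j
  have hj0 : j.val ≠ 0 := fun h0 => by
    rw [bellmanOp_apply_of_eq_zero h0] at hvj hwj
    linarith
  rw [bellmanOp_apply_of_ne_zero hj0] at hvj hwj
  rcases max_choice (continuationValue N lam delta G p v j) (interventionValue N C v j) with
    hA | hB
  · have hq : lam / (lam + delta) * (v j - w j) < v j - w j :=
      mul_lt_of_lt_one_left hd ((div_lt_one (by positivity)).2 (by linarith))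
    linarith [continuationValue_le_add (G := G) hlam hdelta.le hp hpsum hd.le hgap j,
      le_max_left (continuationValue N lam delta G p w j) (interventionValue N C w j)]
  · obtain ⟨i, hi, hvB⟩ := exists_interventionValue_eq C v j
    have hwB := le_interventionValue C w j i hi
    rcases hj ⟨j.val + i, hi⟩ with hlt | ⟨-, hle⟩
    · linarith [le_max_right (continuationValue N lam delta G p w j) (interventionValue N C w j)]
    · obtain rfl : i = 0 := by have : j.val + i ≤ j.val := hle; omega
      simp only [Nat.add_zero, Fin.eta, CharP.cast_eq_zero, zero_mul] at hvB
      linarith [hC (j.val * (1 / N))]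

end BellmanOp

open BellmanOp

theorem bellmanOp_unique_fixedPoint_and_convergence_general (N : ℕ)
    (lam delta : ℝ) (hlam : 0 < lam) (hdelta : 0 < delta)
    (G : ℝ → ℝ) (hGnn : ∀ r ∈ Set.Icc (0 : ℝ) 1, 0 ≤ G r)
    (KG : ℝ) (hGbdd : ∀ r ∈ Set.Icc (0 : ℝ) 1, G r ≤ KG)
    (p : ℕ → ℝ) (hp : ∀ i, 0 ≤ p i) (hpsum : ∑ i ∈ Finset.range (N + 1), p i ≤ 1)
    (C : ℝ → ℝ → ℝ) (c₀ : ℝ) (hc₀ : 0 < c₀) (hC : ∀ r ζ, c₀ ≤ C r ζ) :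
    ∃ vstar : Fin (N + 1) → ℝ,
      bellmanOp N lam delta G p C vstar = vstar ∧
      (∀ w : Fin (N + 1) → ℝ, bellmanOp N lam delta G p C w = w → w = vstar) ∧
      Tendsto (fun n => (bellmanOp N lam delta G p C)^[n] 0) atTop (nhds vstar) := by
  have hCpos : ∀ r ζ, 0 < C r ζ := fun r ζ => hc₀.trans_le (hC r ζ)
  have hKG : 0 ≤ KG := (hGnn 0 ⟨le_rfl, zero_le_one⟩).trans (hGbdd 0 ⟨le_rfl, zero_le_one⟩)
  obtain ⟨vstar, hfix, hlim⟩ := exists_isFixedPt_tendsto_iterate_of_monotone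
    (bellmanOp_monotone hlam.le hdelta.le hp hpsum)
    (bellmanOp_lipschitzWith_one hlam.le hdelta.le hp hpsum).continuous
    (zero_le_bellmanOp_zero hlam.le hdelta.le hGnn)
    (bellmanOp_const_le hlam.le hdelta hp hpsum hKG hGbdd fun r ζ => (hCpos r ζ).le)
    (fun _ => div_nonneg hKG hdelta.le)
  have hle {v w} (hv : bellmanOp N lam delta G p C v = v)
      (hw : bellmanOp N lam delta G p C w = w) : v ≤ w :=
    le_of_bellmanOp_eq hlam.le hdelta hp hpsum (fun r => hCpos r 0) hv hw
  exact ⟨vstar, hfix, fun w hw => (hle hw hfix).antisymm (hle hfix hw), hlim⟩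

/-- The Jacobi iteration for the discretized Bellman operator converges from the zero vector
to the unique fixed point of the operator. -/
theorem bellmanOp_unique_fixedPoint_and_convergence (N : ℕ) (hN : 0 < N)
    (lam delta : ℝ) (hlam : 0 < lam) (hdelta : 0 < delta)
    (G : ℝ → ℝ) (hGnn : ∀ r ∈ Set.Icc (0 : ℝ) 1, 0 ≤ G r)
    (KG : ℝ) (hGbdd : ∀ r ∈ Set.Icc (0 : ℝ) 1, G r ≤ KG)
    (p : ℕ → ℝ) (hp : ∀ i, 0 ≤ p i) (hpsum : ∑ i ∈ Finset.range (N + 1), p i ≤ 1)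
    (C : ℝ → ℝ → ℝ) (c₀ : ℝ) (hc₀ : 0 < c₀) (hC : ∀ r ζ, c₀ ≤ C r ζ) :
    ∃ vstar : Fin (N + 1) → ℝ,
      bellmanOp N lam delta G p C vstar = vstar ∧
      (∀ w : Fin (N + 1) → ℝ, bellmanOp N lam delta G p C w = w → w = vstar) ∧
      Tendsto (fun n => (bellmanOp N lam delta G p C)^[n] 0) atTop (nhds vstar) :=
  bellmanOp_unique_fixedPoint_and_convergence_general N lam delta hlam hdelta G hGnn KG hGbdd p hp
    hpsum C c₀ hc₀ hC
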